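/- arXiv:2408.06343 — 6 statements merged into one kernel-verified Lean document; each statement's English description precedes it below -/
import Mathlib

section
/- Let g : (0,∞) → ℝ be a continuous strictly convex function and let A be an n×n positive definite complex matrix. Then the function X ↦ tr g(A^{-1/2} X A^{-1/2}), defined on the cone of n×n positive definite complex matrices (with g applied by the spectral functional calculus), is strictly convex: for positive definite X ≠ Y and 0 < t < 1, tr g(A^{-1/2}((1−t)X + tY)A^{-1/2}) < (1−t)·tr g(A^{-1/2} X A^{-1/2}) + t·tr g(A^{-1/2} Y A^{-1/2}). -/
/-
Let `V` be a unitary diagonalising `Z = (1 - t) • M + t • N`, and let `aₖ`, `bₖ` be the diagonal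
entries of `Vᴴ M V` and `Vᴴ N V`, so that the eigenvalues of `Z` are `(1 - t) aₖ + t bₖ`.
Writing `Vᴴ M V = W D Wᴴ` with `W` unitary and `D = diag μ` the eigenvalues of `M`, the vector `a`
is the image of `μ` under the doubly stochastic matrix `|Wₖⱼ|²`, whence Peierls' inequality
`∑ₖ g aₖ ≤ tr g(M)` by Jensen. Convexity of `g` at each `k` and Peierls for `M` and `N` give
`tr g(Z) ≤ (1 - t) tr g(M) + t tr g(N)`. In the equality case strict convexity forces `aₖ = bₖ`,
and `μⱼ = aₖ` whenever `Wₖⱼ ≠ 0`, i.e. `W D = diag(a) W`; so `Vᴴ M V = diag(a) = Vᴴ N V` and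
`M = N`. Conjugation by the invertible Hermitian matrix `A^{-1/2}` preserves positive
definiteness and distinctness.
-/

open Matrix
open scoped ComplexOrder

variable {n : Type*} [Fintype n] [DecidableEq n]

/-- The unique positive semidefinite square root of a positive (semi)definite matrix,
obtained by applying `Real.sqrt` via the spectral (continuous) functional calculus. -/
noncomputable def msqrt (M : Matrix n n ℂ) : Matrix n n ℂ := cfc Real.sqrt M

open Finset

section Stochastic

variable {s : Set ℝ} {g : ℝ → ℝ} {P : Matrix n n ℝ} {μ : n → ℝ}

lemma Convex.mulVec_mem_of_mem_rowStochastic (hs : Convex ℝ s) (hP : P ∈ rowStochastic ℝ n)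
    (hμ : ∀ j, μ j ∈ s) (k : n) : (P *ᵥ μ) k ∈ s :=
  hs.sum_mem (fun _ _ => nonneg_of_mem_rowStochastic hP) (sum_row_of_mem_rowStochastic hP k)
    fun j _ => hμ j

lemma ConvexOn.map_mulVec_le (hg : ConvexOn ℝ s g) (hP : P ∈ rowStochastic ℝ n)
    (hμ : ∀ j, μ j ∈ s) (k : n) : g ((P *ᵥ μ) k) ≤ (P *ᵥ (g ∘ μ)) k :=
  hg.map_sum_le (fun _ _ => nonneg_of_mem_rowStochastic hP) (sum_row_of_mem_rowStochastic hP k)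
    fun j _ => hμ j

lemma ConvexOn.sum_map_mulVec_le (hg : ConvexOn ℝ s g) (hP : P ∈ doublyStochastic ℝ n)
    (hμ : ∀ j, μ j ∈ s) : ∑ k, g ((P *ᵥ μ) k) ≤ ∑ j, g (μ j) :=
  calc ∑ k, g ((P *ᵥ μ) k) ≤ ∑ k, (P *ᵥ (g ∘ μ)) k :=
        sum_le_sum fun k _ => hg.map_mulVec_le
          (mem_doublyStochastic_iff_mem_rowStochastic_and_mem_colStochastic.mp hP).1 hμ k
    _ = ∑ j, g (μ j) := sum_mulVec_of_mem_doublyStochastic hP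

lemma StrictConvexOn.eq_mulVec_of_sum_map_mulVec_eq (hg : StrictConvexOn ℝ s g)
    (hP : P ∈ doublyStochastic ℝ n) (hμ : ∀ j, μ j ∈ s)
    (heq : ∑ k, g ((P *ᵥ μ) k) = ∑ j, g (μ j)) {k j : n} (hkj : P k j ≠ 0) :
    μ j = (P *ᵥ μ) k := by
  have hrow := (mem_doublyStochastic_iff_mem_rowStochastic_and_mem_colStochastic.mp hP).1
  have hle := fun k (_ : k ∈ univ) => hg.convexOn.map_mulVec_le hrow hμ k
  have hk : g ((P *ᵥ μ) k) = (P *ᵥ (g ∘ μ)) k := (sum_eq_sum_iff_of_le hle).mp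
    (heq.trans (sum_mulVec_of_mem_doublyStochastic hP).symm) k (mem_univ k)
  exact (hg.map_sum_eq_iff' (fun _ _ => nonneg_of_mem_rowStochastic hrow)
    (sum_row_of_mem_rowStochastic hrow k) fun j _ => hμ j).mp hk j (mem_univ j) hkj

end Stochastic

namespace Matrix

lemma sum_normSq_apply_eq_one {W : Matrix n n ℂ} (hW : W ∈ unitaryGroup n ℂ) (k : n) :
    ∑ j, Complex.normSq (W k j) = 1 := by
  have h := congr_fun (congr_fun (mem_unitaryGroup_iff.mp hW) k) k
  rw [mul_apply, one_apply_eq] at h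
  exact_mod_cast (by simpa [Complex.mul_conj] using h : ∑ j, (Complex.normSq (W k j) : ℂ) = 1)

lemma map_normSq_mem_doublyStochastic {W : Matrix n n ℂ} (hW : W ∈ unitaryGroup n ℂ) :
    W.map Complex.normSq ∈ doublyStochastic ℝ n := by
  refine mem_doublyStochastic_iff_sum.mpr
    ⟨fun _ _ => Complex.normSq_nonneg _, sum_normSq_apply_eq_one hW, fun j => ?_⟩
  simpa using sum_normSq_apply_eq_one (Unitary.star_mem hW) j

lemma re_mul_diagonal_mul_conjTranspose_apply_self (W : Matrix n n ℂ) (μ : n → ℝ) (k : n) :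
    ((W * diagonal (RCLike.ofReal ∘ μ : n → ℂ) * Wᴴ) k k).re = (W.map Complex.normSq *ᵥ μ) k := by
  rw [mul_apply, Complex.re_sum]
  refine sum_congr rfl fun j _ => ?_
  rw [mul_diagonal, conjTranspose_apply, mul_right_comm, RCLike.star_def, Complex.mul_conj]
  simp

lemma mul_diagonal_mul_conjTranspose_eq_diagonal {W : Matrix n n ℂ}
    (hW : W ∈ unitaryGroup n ℂ) {μ c : n → ℝ} (h : ∀ k j, W k j ≠ 0 → μ j = c k) :
    W * diagonal (RCLike.ofReal ∘ μ : n → ℂ) * Wᴴ = diagonal (RCLike.ofReal ∘ c : n → ℂ) := by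
  have hWμ : W * diagonal (RCLike.ofReal ∘ μ : n → ℂ) = diagonal (RCLike.ofReal ∘ c) * W := by
    ext k j
    rw [mul_diagonal, diagonal_mul]
    by_cases hkj : W k j = 0
    · simp [hkj]
    · simp [h k j hkj, mul_comm]
  rw [hWμ, Matrix.mul_assoc, ← star_eq_conjTranspose, mem_unitaryGroup_iff.mp hW, Matrix.mul_one]

lemma eq_of_conjTranspose_mul_mul_eq {V M N : Matrix n n ℂ} (hV : V ∈ unitaryGroup n ℂ)
    (h : Vᴴ * M * V = Vᴴ * N * V) : M = N :=
  EquivLike.injective (Unitary.conjStarAlgAut ℂ _ (star ⟨V, hV⟩))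
    (by simpa only [Unitary.conjStarAlgAut_apply, Unitary.coe_star, star_star,
      star_eq_conjTranspose, conjTranspose_conjTranspose] using h)

namespace IsHermitian

variable {M N V : Matrix n n ℂ} {s : Set ℝ} {g : ℝ → ℝ}

lemma re_trace_cfc (hM : M.IsHermitian) (g : ℝ → ℝ) :
    ((cfc g M).trace).re = ∑ i, g (hM.eigenvalues i) := by
  rw [hM.cfc_eq, IsHermitian.cfc, Unitary.conjStarAlgAut_apply, trace_mul_cycle,
    Unitary.star_mul_self_of_mem (SetLike.coe_mem _), Matrix.one_mul, trace_diagonal]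
  simp

lemma eigenvalues_eq_re_conjTranspose_mul_mul_apply_self (hM : M.IsHermitian) (k : n) :
    hM.eigenvalues k =
      (((hM.eigenvectorUnitary : Matrix n n ℂ)ᴴ * M * hM.eigenvectorUnitary) k k).re := by
  have h := hM.conjStarAlgAut_star_eigenvectorUnitary
  rw [Unitary.conjStarAlgAut_apply, Unitary.coe_star, star_star] at h
  simp [← star_eq_conjTranspose, h]

omit [Fintype n] in
lemma eq_of_isDiag (hM : M.IsHermitian) (hN : N.IsHermitian) (hMd : M.IsDiag) (hNd : N.IsDiag)
    (h : ∀ i, (M i i).re = (N i i).re) : M = N := by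
  ext i j
  by_cases hij : i = j
  · subst hij
    rw [← hM.coe_re_apply_self i, ← hN.coe_re_apply_self i]
    exact congrArg _ (h i)
  · rw [hMd hij, hNd hij]

lemma exists_unitary_conjTranspose_mul_mul_eq (hM : M.IsHermitian) (hV : V ∈ unitaryGroup n ℂ) :
    ∃ W ∈ unitaryGroup n ℂ,
      Vᴴ * M * V = W * diagonal (RCLike.ofReal ∘ hM.eigenvalues : n → ℂ) * Wᴴ := by
  refine ⟨Vᴴ * hM.eigenvectorUnitary, mul_mem (Unitary.star_mem hV) (SetLike.coe_mem _), ?_⟩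
  conv_lhs => rw [hM.spectral_theorem]
  simp [Unitary.conjStarAlgAut_apply, conjTranspose_mul, Matrix.mul_assoc, star_eq_conjTranspose]

lemma re_conjTranspose_mul_mul_apply_self_mem (hM : M.IsHermitian) (hs : Convex ℝ s)
    (hMs : ∀ i, hM.eigenvalues i ∈ s) (hV : V ∈ unitaryGroup n ℂ) (k : n) :
    ((Vᴴ * M * V) k k).re ∈ s := by
  obtain ⟨W, hW, hconj⟩ := hM.exists_unitary_conjTranspose_mul_mul_eq hV
  rw [hconj, re_mul_diagonal_mul_conjTranspose_apply_self]
  exact hs.mulVec_mem_of_mem_rowStochastic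
    (mem_doublyStochastic_iff_mem_rowStochastic_and_mem_colStochastic.mp
      (map_normSq_mem_doublyStochastic hW)).1 hMs k

/-- Peierls' inequality. -/
theorem sum_map_re_conjTranspose_mul_mul_apply_self_le (hM : M.IsHermitian)
    (hg : ConvexOn ℝ s g) (hMs : ∀ i, hM.eigenvalues i ∈ s) (hV : V ∈ unitaryGroup n ℂ) :
    ∑ k, g ((Vᴴ * M * V) k k).re ≤ ((cfc g M).trace).re := by
  obtain ⟨W, hW, hconj⟩ := hM.exists_unitary_conjTranspose_mul_mul_eq hV
  simp only [hconj, re_mul_diagonal_mul_conjTranspose_apply_self, hM.re_trace_cfc]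
  exact hg.sum_map_mulVec_le (map_normSq_mem_doublyStochastic hW) hMs

theorem isDiag_conjTranspose_mul_mul_of_sum_map_eq (hM : M.IsHermitian)
    (hg : StrictConvexOn ℝ s g) (hMs : ∀ i, hM.eigenvalues i ∈ s) (hV : V ∈ unitaryGroup n ℂ)
    (heq : ∑ k, g ((Vᴴ * M * V) k k).re = ((cfc g M).trace).re) : (Vᴴ * M * V).IsDiag := by
  obtain ⟨W, hW, hconj⟩ := hM.exists_unitary_conjTranspose_mul_mul_eq hV
  simp only [hconj, re_mul_diagonal_mul_conjTranspose_apply_self, hM.re_trace_cfc] at heq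
  rw [hconj, mul_diagonal_mul_conjTranspose_eq_diagonal hW fun k j hkj =>
    hg.eq_mulVec_of_sum_map_mulVec_eq (map_normSq_mem_doublyStochastic hW) hMs heq
      (by simpa using hkj)]
  exact isDiag_diagonal _

theorem re_trace_cfc_convexComb_lt (hM : M.IsHermitian) (hN : N.IsHermitian)
    (hg : StrictConvexOn ℝ s g) (hMs : ∀ i, hM.eigenvalues i ∈ s)
    (hNs : ∀ i, hN.eigenvalues i ∈ s) (hMN : M ≠ N) {t : ℝ} (ht0 : 0 < t) (ht1 : t < 1) :
    ((cfc g ((1 - t) • M + t • N)).trace).re <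
      (1 - t) * ((cfc g M).trace).re + t * ((cfc g N).trace).re := by
  refine lt_of_not_ge fun hge => hMN ?_
  have hZ : ((1 - t) • M + t • N).IsHermitian :=
    (hM.smul (IsSelfAdjoint.all (1 - t))).add (hN.smul (IsSelfAdjoint.all t))
  set V : Matrix n n ℂ := (hZ.eigenvectorUnitary : Matrix n n ℂ)
  have hV : V ∈ unitaryGroup n ℂ := SetLike.coe_mem _
  set a : n → ℝ := fun k => ((Vᴴ * M * V) k k).re
  set b : n → ℝ := fun k => ((Vᴴ * N * V) k k).re
  have ha k : a k ∈ s := hM.re_conjTranspose_mul_mul_apply_self_mem hg.1 hMs hV k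
  have hb k : b k ∈ s := hN.re_conjTranspose_mul_mul_apply_self_mem hg.1 hNs hV k
  have hlam k : hZ.eigenvalues k = (1 - t) * a k + t * b k := by
    rw [hZ.eigenvalues_eq_re_conjTranspose_mul_mul_apply_self]
    simp [a, b, V, Matrix.mul_add, Matrix.add_mul]
  have hJ k : g (hZ.eigenvalues k) ≤ (1 - t) * g (a k) + t * g (b k) := by
    rw [hlam]
    exact hg.convexOn.2 (ha k) (hb k) (sub_pos.mpr ht1).le ht0.le (sub_add_cancel 1 t)
  have hPM := hM.sum_map_re_conjTranspose_mul_mul_apply_self_le hg.convexOn hMs hV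
  have hPN := hN.sum_map_re_conjTranspose_mul_mul_apply_self_le hg.convexOn hNs hV
  have hsum : ∑ k, g (hZ.eigenvalues k) ≤ (1 - t) * ∑ k, g (a k) + t * ∑ k, g (b k) := by
    simpa only [sum_add_distrib, mul_sum] using sum_le_sum fun k _ => hJ k
  rw [hZ.re_trace_cfc] at hge
  have hMeq : ∑ k, g (a k) = ((cfc g M).trace).re := by nlinarith
  have hNeq : ∑ k, g (b k) = ((cfc g N).trace).re := by nlinarith
  rw [hMeq, hNeq] at hsum
  have hJeq : ∀ k ∈ univ, g (hZ.eigenvalues k) = (1 - t) * g (a k) + t * g (b k) :=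
    (sum_eq_sum_iff_of_le fun k _ => hJ k).mp
      (by simp only [sum_add_distrib, ← mul_sum, hMeq, hNeq]; linarith)
  have hab k : a k = b k := by
    by_contra hne
    refine (hg.2 (ha k) (hb k) hne (sub_pos.mpr ht1) ht0 (sub_add_cancel 1 t)).ne ?_
    simpa only [smul_eq_mul, ← hlam] using hJeq k (mem_univ k)
  exact eq_of_conjTranspose_mul_mul_eq hV <|
    (isHermitian_conjTranspose_mul_mul V hM).eq_of_isDiag (isHermitian_conjTranspose_mul_mul V hN)
      (hM.isDiag_conjTranspose_mul_mul_of_sum_map_eq hg hMs hV hMeq)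
      (hN.isDiag_conjTranspose_mul_mul_of_sum_map_eq hg hNs hV hNeq) hab

end IsHermitian

end Matrix

lemma isHermitian_msqrt (A : Matrix n n ℂ) : (msqrt A).IsHermitian := cfc_predicate _ _

lemma isUnit_msqrt {A : Matrix n n ℂ} (hA : A.PosDef) : IsUnit (msqrt A) := by
  rw [msqrt, isUnit_cfc_iff _ _ (by fun_prop) hA.1.isSelfAdjoint]
  intro x hx
  obtain ⟨i, rfl⟩ := hA.1.spectrum_real_eq_range_eigenvalues ▸ hx
  exact (Real.sqrt_pos.mpr (hA.eigenvalues_pos i)).ne'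

theorem trace_cfc_strictly_convex_general
    (g : ℝ → ℝ)
    (hg_conv : StrictConvexOn ℝ (Set.Ioi (0:ℝ)) g)
    (A : Matrix n n ℂ) (hA : A.PosDef)
    (X Y : Matrix n n ℂ) (hX : X.PosDef) (hY : Y.PosDef) (hXY : X ≠ Y)
    (t : ℝ) (ht0 : 0 < t) (ht1 : t < 1) :
    ((cfc g ((msqrt A)⁻¹ * ((1 - t) • X + t • Y) * (msqrt A)⁻¹)).trace).re <
      (1 - t) * ((cfc g ((msqrt A)⁻¹ * X * (msqrt A)⁻¹)).trace).re +
        t * ((cfc g ((msqrt A)⁻¹ * Y * (msqrt A)⁻¹)).trace).re := by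
  set S := (msqrt A)⁻¹
  have hS : S.IsHermitian := (isHermitian_msqrt A).inv
  have hSu : IsUnit S := isUnit_nonsing_inv_iff.mpr (isUnit_msqrt hA)
  have hconj {P : Matrix n n ℂ} (hP : P.PosDef) : (S * P * S).PosDef := by
    simpa only [hS.eq] using hP.conjTranspose_mul_mul_same (mulVec_injective_iff_isUnit.mpr hSu)
  rw [show S * ((1 - t) • X + t • Y) * S = (1 - t) • (S * X * S) + t • (S * Y * S) by
    simp only [Matrix.mul_add, Matrix.add_mul, Matrix.mul_smul, Matrix.smul_mul]]
  refine (hconj hX).1.re_trace_cfc_convexComb_lt (hconj hY).1 hg_conv (hconj hX).eigenvalues_pos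
    (hconj hY).eigenvalues_pos (fun h => hXY ?_) ht0 ht1
  exact hSu.mul_left_cancel (hSu.mul_right_cancel h)

/-- If `g : (0,∞) → ℝ` is continuous and strictly convex and `A` is positive
definite, then `X ↦ tr g(A^{-1/2} X A^{-1/2})` is strictly convex on the positive definite
cone: for positive definite `X ≠ Y` and `0 < t < 1`,
`tr g(A^{-1/2}((1−t)X + tY)A^{-1/2}) < (1−t) tr g(A^{-1/2}XA^{-1/2}) + t tr g(A^{-1/2}YA^{-1/2})`.
Here `g` is applied by the spectral functional calculus `cfc`. -/
theorem trace_cfc_strictly_convex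
    (g : ℝ → ℝ)
    (hg_cont : ContinuousOn g (Set.Ioi (0:ℝ)))
    (hg_conv : StrictConvexOn ℝ (Set.Ioi (0:ℝ)) g)
    (A : Matrix n n ℂ) (hA : A.PosDef)
    (X Y : Matrix n n ℂ) (hX : X.PosDef) (hY : Y.PosDef) (hXY : X ≠ Y)
    (t : ℝ) (ht0 : 0 < t) (ht1 : t < 1) :
    ((cfc g ((msqrt A)⁻¹ * ((1 - t) • X + t • Y) * (msqrt A)⁻¹)).trace).re <
      (1 - t) * ((cfc g ((msqrt A)⁻¹ * X * (msqrt A)⁻¹)).trace).re +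
        t * ((cfc g ((msqrt A)⁻¹ * Y * (msqrt A)⁻¹)).trace).re :=
  trace_cfc_strictly_convex_general g hg_conv A hA X Y hX hY hXY t ht0 ht1
end

section
/- Let μ be a Borel probability measure on [0,1] and define, for an n×n positive definite complex matrix X, F_μ(X) = ∫_{[0,1]} X((1−λ)X + λI)⁻¹ dμ(λ). Then F_μ is Fréchet differentiable on the open cone of positive definite matrices, and its derivative at X in the direction of a Hermitian matrix Y is D F_μ(X)[Y] = ∫_{[0,1]} λ ((1−λ)X + λI)⁻¹ Y ((1−λ)X + λI)⁻¹ dμ(λ). -/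
open Matrix MeasureTheory
open scoped ComplexOrder

attribute [local instance] Matrix.normedAddCommGroup Matrix.normedSpace

variable {n : Type*} [Fintype n] [DecidableEq n]

/-- Entrywise (Bochner) integral over `[0,1]` of a matrix-valued function against `μ`. -/
noncomputable def mInt (μ : Measure ℝ) (f : ℝ → Matrix n n ℂ) : Matrix n n ℂ :=
  Matrix.of fun i j => ∫ l in Set.Icc (0:ℝ) 1, (f l) i j ∂μ

/-- `F_μ(X) = ∫_{[0,1]} X((1−λ)X + λI)⁻¹ dμ(λ)`. -/
noncomputable def Fmu (μ : Measure ℝ) (X : Matrix n n ℂ) : Matrix n n ℂ :=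
  mInt μ fun l => X * ((1 - l) • X + l • (1 : Matrix n n ℂ))⁻¹

/-! For `λ ∈ [0,1]` the matrix `A = (1-λ)X + λI` is positive definite, hence invertible, and since
`[0,1]` is compact it stays invertible, uniformly in `λ`, for `W` near `X`. There the integrand
`W ↦ W A(W)⁻¹` has derivative `Y ↦ Y A⁻¹ - (1-λ) W A⁻¹ Y A⁻¹`, which equals `λ A⁻¹ Y A⁻¹` because
`(1-λ)W = A - λI`. This is jointly continuous in `(W, λ)`, hence locally bounded, so one may
differentiate under the integral sign.

The analysis is carried out with the `L^∞` operator norm on matrices, which makes them a complete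
normed algebra and induces the same topology as the entrywise norm used in the statement. -/

open Filter Topology in
theorem hasFDerivAt_setIntegral_of_continuousOn
    {α 𝕜 H E : Type*} [TopologicalSpace α] [T2Space α] [MeasurableSpace α] [OpensMeasurableSpace α]
    {μ : Measure α} [IsFiniteMeasureOnCompacts μ] [RCLike 𝕜]
    [NormedAddCommGroup H] [NormedSpace 𝕜 H]
    [NormedAddCommGroup E] [NormedSpace ℝ E] [NormedSpace 𝕜 E]
    {F : H → α → E} {F' : H → α → H →L[𝕜] E} {K : Set α} {U : Set (H × α)} {x₀ : H}
    (hK : IsCompact K) (hU : IsOpen U) (hKU : ∀ a ∈ K, (x₀, a) ∈ U)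
    (hF : ContinuousOn (fun p : H × α => F p.1 p.2) U)
    (hF' : ContinuousOn (fun p : H × α => F' p.1 p.2) U)
    (hderiv : ∀ p ∈ U, HasFDerivAt (F · p.2) (F' p.1 p.2) p.1) :
    HasFDerivAt (fun x => ∫ a in K, F x a ∂μ) (∫ a in K, F' x₀ a ∂μ) x₀ := by
  have hsec {x : H} (hx : ∀ a ∈ K, (x, a) ∈ U) : Set.MapsTo (fun a => (x, a)) K U := hx
  obtain ⟨C, hC⟩ : ∃ C, ∀ a ∈ K, ‖F' x₀ a‖ ≤ C :=
    hK.exists_bound_of_continuousOn (hF'.comp (Continuous.prodMk_right x₀).continuousOn (hsec hKU))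
  have hnear : ∀ᶠ x in 𝓝 x₀, ∀ a ∈ K, (x, a) ∈ U ∧ ‖F' x a‖ ≤ C + 1 := by
    refine hK.eventually_forall_of_forall_eventually fun a ha => ?_
    have hcont := (hF' (x₀, a) (hKU a ha)).continuousAt (hU.mem_nhds (hKU a ha))
    filter_upwards [hU.mem_nhds (hKU a ha),
      hcont.norm.eventually (gt_mem_nhds ((hC a ha).trans_lt (lt_add_one C)))] with p hpU hp
    exact ⟨hpU, hp.le⟩
  have hint {x : H} (hx : ∀ a ∈ K, (x, a) ∈ U) : IntegrableOn (F x) K μ :=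
    (hF.comp (Continuous.prodMk_right x).continuousOn (hsec hx)).integrableOn_compact hK
  refine hasFDerivAt_integral_of_dominated_of_fderiv_le (bound := fun _ => C + 1) hnear
    (hnear.mono fun x hx => (hint fun a ha => (hx a ha).1).aestronglyMeasurable) (hint hKU)
    ((hF'.comp (Continuous.prodMk_right x₀).continuousOn (hsec hKU)).integrableOn_compact
      hK).aestronglyMeasurable
    ?_ (integrableOn_const hK.measure_ne_top) ?_
  · filter_upwards [ae_restrict_mem hK.measurableSet] with a ha x hx using (hx a ha).2
  · filter_upwards [ae_restrict_mem hK.measurableSet] with a ha x hx using hderiv (x, a) (hx a ha).1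

section NormedAlgebra

variable {𝕜 R : Type*} [NontriviallyNormedField 𝕜] [NormedRing R] [NormedAlgebra 𝕜 R]
  [HasSummableGeomSeries R]

open ContinuousLinearMap

theorem hasFDerivAt_mul_ringInverse_lineMap {l : 𝕜} {W : R}
    (hA : IsUnit ((1 - l) • W + l • (1 : R))) :
    HasFDerivAt (fun V : R => V * Ring.inverse ((1 - l) • V + l • (1 : R)))
      (l • mulLeftRight 𝕜 R (Ring.inverse ((1 - l) • W + l • (1 : R)))
        (Ring.inverse ((1 - l) • W + l • (1 : R)))) W := by
  set B := Ring.inverse ((1 - l) • W + l • (1 : R))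
  have hAffine : HasFDerivAt (fun V : R => (1 - l) • V + l • (1 : R))
      ((1 - l) • ContinuousLinearMap.id 𝕜 R) W :=
    ((hasFDerivAt_id W).const_smul (1 - l)).add_const _
  have hInv := (hasFDerivAt_ringInverse (𝕜 := 𝕜) hA.unit).comp W hAffine
  refine ((hasFDerivAt_id W).mul' hInv).congr_fderiv (ContinuousLinearMap.ext fun Y => ?_)
  have hWB : ((1 - l) • W) * B = 1 - l • B := by
    rw [eq_sub_iff_add_eq, ← smul_one_mul l B, ← add_mul]
    exact Ring.mul_inverse_cancel _ hA
  have hB : (↑hA.unit⁻¹ : R) = B := by rw [← Ring.inverse_unit, IsUnit.unit_spec]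
  change W * -(↑hA.unit⁻¹ * ((1 - l) • Y) * ↑hA.unit⁻¹) + Y * B = l • (B * Y * B)
  rw [hB, mul_neg, ← mul_assoc, ← mul_assoc, mul_smul_comm, ← smul_mul_assoc, ← smul_mul_assoc,
    hWB, sub_mul, sub_mul, one_mul, smul_mul_assoc, smul_mul_assoc, mul_assoc, neg_sub,
    sub_add_cancel]

theorem isOpen_setOf_isUnit_lineMap :
    IsOpen {p : R × 𝕜 | IsUnit ((1 - p.2) • p.1 + p.2 • (1 : R))} :=
  Units.isOpen.preimage (by fun_prop)

theorem continuousOn_ringInverse_lineMap :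
    ContinuousOn (fun p : R × 𝕜 => Ring.inverse ((1 - p.2) • p.1 + p.2 • (1 : R)))
      {p : R × 𝕜 | IsUnit ((1 - p.2) • p.1 + p.2 • (1 : R))} := fun p hp =>
  ((NormedRing.inverse_continuousAt hp.unit).comp (f := fun p : R × 𝕜 => (1 - p.2) • p.1 + p.2 • 1)
    (by fun_prop)).continuousWithinAt

theorem continuousOn_mul_ringInverse_lineMap :
    ContinuousOn (fun p : R × 𝕜 => p.1 * Ring.inverse ((1 - p.2) • p.1 + p.2 • (1 : R)))
      {p : R × 𝕜 | IsUnit ((1 - p.2) • p.1 + p.2 • (1 : R))} :=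
  continuous_fst.continuousOn.mul continuousOn_ringInverse_lineMap

theorem continuousOn_smul_mulLeftRight_ringInverse_lineMap :
    ContinuousOn (fun p : R × 𝕜 => p.2 • mulLeftRight 𝕜 R
        (Ring.inverse ((1 - p.2) • p.1 + p.2 • (1 : R)))
        (Ring.inverse ((1 - p.2) • p.1 + p.2 • (1 : R))))
      {p : R × 𝕜 | IsUnit ((1 - p.2) • p.1 + p.2 • (1 : R))} := by
  have := continuousOn_ringInverse_lineMap (𝕜 := 𝕜) (R := R)
  fun_prop

end NormedAlgebra

theorem Matrix.PosDef.lineMap_one {m 𝕜 : Type*} [DecidableEq m] [RCLike 𝕜]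
    {X : Matrix m m 𝕜} (hX : X.PosDef) {l : ℝ} (hl : l ∈ Set.Icc (0 : ℝ) 1) :
    ((1 - l) • X + l • (1 : Matrix m m 𝕜)).PosDef := by
  rcases hl.2.lt_or_eq with hl1 | rfl
  · exact (hX.smul (sub_pos.mpr hl1)).add_posSemidef (PosSemidef.one.smul hl.1)
  · simpa using PosDef.one

section OperatorNorm

open scoped Matrix.Norms.Operator

theorem mInt_eq_setIntegral (μ : Measure ℝ) [IsFiniteMeasureOnCompacts μ] {f : ℝ → Matrix n n ℂ}
    (hf : ContinuousOn f (Set.Icc 0 1)) : mInt μ f = ∫ l in Set.Icc 0 1, f l ∂μ := by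
  ext i j
  exact (Matrix.entryLinearMap ℝ ℂ i j).toContinuousLinearMap.integral_comp_comm
    (hf.integrableOn_compact isCompact_Icc)

theorem Fmu_eq_setIntegral (μ : Measure ℝ) [IsFiniteMeasureOnCompacts μ] {W : Matrix n n ℂ}
    (hW : ∀ l ∈ Set.Icc (0 : ℝ) 1, IsUnit ((1 - l) • W + l • (1 : Matrix n n ℂ))) :
    Fmu μ W = ∫ l in Set.Icc 0 1, W * Ring.inverse ((1 - l) • W + l • (1 : Matrix n n ℂ)) ∂μ := by
  simp only [Fmu, Matrix.nonsing_inv_eq_ringInverse]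
  exact mInt_eq_setIntegral μ
    (continuousOn_mul_ringInverse_lineMap.comp (Continuous.prodMk_right W).continuousOn hW)

theorem setIntegral_smul_mulLeftRight_apply (μ : Measure ℝ) [IsFiniteMeasureOnCompacts μ]
    {X : Matrix n n ℂ}
    (hX : ∀ l ∈ Set.Icc (0 : ℝ) 1, IsUnit ((1 - l) • X + l • (1 : Matrix n n ℂ)))
    (Y : Matrix n n ℂ) :
    (∫ l in Set.Icc 0 1, l • ContinuousLinearMap.mulLeftRight ℝ _
        (Ring.inverse ((1 - l) • X + l • (1 : Matrix n n ℂ)))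
        (Ring.inverse ((1 - l) • X + l • (1 : Matrix n n ℂ))) ∂μ) Y =
      mInt μ fun l => l • (((1 - l) • X + l • (1 : Matrix n n ℂ))⁻¹ * Y *
        ((1 - l) • X + l • (1 : Matrix n n ℂ))⁻¹) := by
  have hinv := continuousOn_ringInverse_lineMap.comp (Continuous.prodMk_right X).continuousOn hX
  simp only [Function.comp_def] at hinv
  have hint := (continuousOn_smul_mulLeftRight_ringInverse_lineMap.comp
    (Continuous.prodMk_right X).continuousOn hX).integrableOn_compact (μ := μ) isCompact_Icc
  simp only [Function.comp_def] at hint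
  rw [ContinuousLinearMap.integral_apply hint,
    mInt_eq_setIntegral μ (by simp only [Matrix.nonsing_inv_eq_ringInverse]; fun_prop)]
  simp only [_root_.smul_apply, ContinuousLinearMap.mulLeftRight_apply,
    Matrix.nonsing_inv_eq_ringInverse]

end OperatorNorm

theorem Fmu_hasFDerivAt_general
    (μ : Measure ℝ) [IsProbabilityMeasure μ]
    (X : Matrix n n ℂ) (hX : X.PosDef) :
    ∃ L : Matrix n n ℂ →L[ℝ] Matrix n n ℂ,
      HasFDerivAt (Fmu μ) L X ∧
      ∀ Y : Matrix n n ℂ, Y.IsHermitian →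
        L Y = mInt μ fun l =>
          l • (((1 - l) • X + l • (1 : Matrix n n ℂ))⁻¹ * Y *
            ((1 - l) • X + l • (1 : Matrix n n ℂ))⁻¹) := by
  have hunit : ∀ l ∈ Set.Icc (0 : ℝ) 1, IsUnit ((1 - l) • X + l • (1 : Matrix n n ℂ)) :=
    fun l hl => (hX.lineMap_one hl).isUnit
  open scoped Matrix.Norms.Operator in
  have hnear : ∀ᶠ W in nhds X, ∀ l ∈ Set.Icc (0 : ℝ) 1,
      IsUnit ((1 - l) • W + l • (1 : Matrix n n ℂ)) :=
    isCompact_Icc.eventually_forall_of_forall_eventually fun l hl =>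
      isOpen_setOf_isUnit_lineMap.mem_nhds (hunit l hl)
  open scoped Matrix.Norms.Operator in
  have hderiv := hasFDerivAt_setIntegral_of_continuousOn (μ := μ)
    (F := fun W l => W * Ring.inverse ((1 - l) • W + l • (1 : Matrix n n ℂ)))
    (F' := fun W l => l • ContinuousLinearMap.mulLeftRight ℝ _
      (Ring.inverse ((1 - l) • W + l • (1 : Matrix n n ℂ)))
      (Ring.inverse ((1 - l) • W + l • (1 : Matrix n n ℂ))))
    isCompact_Icc isOpen_setOf_isUnit_lineMap hunit continuousOn_mul_ringInverse_lineMap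
    continuousOn_smul_mulLeftRight_ringInverse_lineMap
    fun p hp => hasFDerivAt_mul_ringInverse_lineMap hp
  exact ⟨_, hderiv.congr_of_eventuallyEq (hnear.mono fun W hW => Fmu_eq_setIntegral μ hW),
    fun Y _ => setIntegral_smul_mulLeftRight_apply μ hunit Y⟩

/-- `F_μ` is Fréchet differentiable (over ℝ) at every positive definite `X`, and
its derivative in the direction of a Hermitian matrix `Y` is
`∫_{[0,1]} λ ((1−λ)X + λI)⁻¹ Y ((1−λ)X + λI)⁻¹ dμ(λ)`. -/
theorem Fmu_hasFDerivAt
    (μ : Measure ℝ) [IsProbabilityMeasure μ]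
    (hsupp : μ (Set.Icc (0:ℝ) 1)ᶜ = 0)
    (X : Matrix n n ℂ) (hX : X.PosDef) :
    ∃ L : Matrix n n ℂ →L[ℝ] Matrix n n ℂ,
      HasFDerivAt (Fmu μ) L X ∧
      ∀ Y : Matrix n n ℂ, Y.IsHermitian →
        L Y = mInt μ fun l =>
          l • (((1 - l) • X + l • (1 : Matrix n n ℂ))⁻¹ * Y *
            ((1 - l) • X + l • (1 : Matrix n n ℂ))⁻¹) :=
  Fmu_hasFDerivAt_general μ X hX
end

section
/- Let μ be a Borel probability measure on [0,1] with μ((0,1)) > 0, and define f_μ(x) = ∫_{[0,1]} x/((1−λ)x + λ) dμ(λ) for x > 0. Then f_μ is strictly concave on (0,∞). -/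
open MeasureTheory Set

/-
Each kernel `x ↦ x / ((1 - λ) x + λ)` is concave on `(0, ∞)`: its concavity gap at a convex
combination `a x + b y` equals `a b λ (1 - λ) (x - y)² / (positive)`, which vanishes only at the
endpoints `λ ∈ {0, 1}`. Integrating, the gap of `f_μ` is the integral of a nonnegative function
that is positive on `(0, 1)`, a set of positive `μ`-mass.
-/

theorem strictConcaveOn_integral {α E : Type*} [MeasurableSpace α] [AddCommGroup E]
    [Module ℝ E] {μ : Measure α} {s : Set E} {f : α → E → ℝ} (hs : Convex ℝ s)
    (hf_int : ∀ x ∈ s, Integrable (fun l => f l x) μ)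
    (hconc : ∀ᵐ l ∂μ, ConcaveOn ℝ s (f l))
    (hstrict : 0 < μ {l | StrictConcaveOn ℝ s (f l)}) :
    StrictConcaveOn ℝ s (fun x => ∫ l, f l x ∂μ) := by
  refine ⟨hs, fun x hx y hy hxy a b ha hb hab => ?_⟩
  have hz := hs hx hy ha.le hb.le hab
  set gap : α → ℝ := fun l => f l (a • x + b • y) - (a * f l x + b * f l y)
  have hsum_int : Integrable (fun l => a * f l x + b * f l y) μ :=
    ((hf_int x hx).const_mul a).add ((hf_int y hy).const_mul b)
  have hgap_int : Integrable gap μ := (hf_int _ hz).sub hsum_int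
  have hgap_nonneg : 0 ≤ᵐ[μ] gap := by
    filter_upwards [hconc] with l hl
    exact sub_nonneg.2 (hl.2 hx hy ha.le hb.le hab)
  have hgap_supp : μ {l | StrictConcaveOn ℝ s (f l)} ≤ μ (Function.support gap) :=
    measure_mono fun l hl => (sub_pos.2 (hl.2 hx hy hxy ha hb hab)).ne'
  have hgap_pos : 0 < ∫ l, gap l ∂μ :=
    (integral_pos_iff_support_of_nonneg_ae hgap_nonneg hgap_int).2 (hstrict.trans_le hgap_supp)
  rw [integral_sub (hf_int _ hz) hsum_int, integral_add ((hf_int x hx).const_mul a)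
    ((hf_int y hy).const_mul b), integral_const_mul, integral_const_mul] at hgap_pos
  simpa only [smul_eq_mul, sub_pos] using hgap_pos

section Kernel

variable {l x : ℝ}

lemma kernel_denom_pos (hl₀ : 0 ≤ l) (hl₁ : l ≤ 1) (hx : 0 < x) : 0 < (1 - l) * x + l := by
  rcases hl₀.eq_or_lt with rfl | hl₀
  · simpa using hx
  · nlinarith

lemma kernel_concavity_gap {y a b : ℝ} (hx : (1 - l) * x + l ≠ 0) (hy : (1 - l) * y + l ≠ 0)
    (hz : (1 - l) * (a * x + b * y) + l ≠ 0) (hab : a + b = 1) :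
    (a * x + b * y) / ((1 - l) * (a * x + b * y) + l)
        - (a * (x / ((1 - l) * x + l)) + b * (y / ((1 - l) * y + l)))
      = a * b * l * (1 - l) * (x - y) ^ 2 /
          (((1 - l) * (a * x + b * y) + l) * ((1 - l) * x + l) * ((1 - l) * y + l)) := by
  obtain rfl : b = 1 - a := by linarith
  rw [mul_div_assoc', mul_div_assoc', div_add_div _ _ hx hy, div_sub_div _ _ hz (mul_ne_zero hx hy),
    div_eq_div_iff (mul_ne_zero hz (mul_ne_zero hx hy)) (mul_ne_zero (mul_ne_zero hz hx) hy)]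
  ring

lemma concaveOn_kernel (hl₀ : 0 ≤ l) (hl₁ : l ≤ 1) :
    ConcaveOn ℝ (Ioi 0) (fun x : ℝ => x / ((1 - l) * x + l)) := by
  refine ⟨convex_Ioi 0, fun x hx y hy a b ha hb hab => ?_⟩
  have hz : 0 < a * x + b * y := convex_Ioi (0 : ℝ) hx hy ha hb hab
  simp only [smul_eq_mul]
  have hDx := kernel_denom_pos hl₀ hl₁ hx
  have hDy := kernel_denom_pos hl₀ hl₁ hy
  have hDz := kernel_denom_pos hl₀ hl₁ hz
  rw [← sub_nonneg, kernel_concavity_gap hDx.ne' hDy.ne' hDz.ne' hab]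
  have : 0 ≤ 1 - l := by linarith
  positivity

lemma strictConcaveOn_kernel (hl₀ : 0 < l) (hl₁ : l < 1) :
    StrictConcaveOn ℝ (Ioi 0) (fun x : ℝ => x / ((1 - l) * x + l)) := by
  refine ⟨convex_Ioi 0, fun x hx y hy hxy a b ha hb hab => ?_⟩
  have hz : 0 < a * x + b * y := convex_Ioi (0 : ℝ) hx hy ha.le hb.le hab
  simp only [smul_eq_mul]
  have hDx := kernel_denom_pos hl₀.le hl₁.le hx
  have hDy := kernel_denom_pos hl₀.le hl₁.le hy
  have hDz := kernel_denom_pos hl₀.le hl₁.le hz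
  rw [← sub_pos, kernel_concavity_gap hDx.ne' hDy.ne' hDz.ne' hab]
  have : 0 < 1 - l := by linarith
  have : x - y ≠ 0 := sub_ne_zero.2 hxy
  positivity

lemma integrableOn_kernel (μ : Measure ℝ) [IsFiniteMeasure μ] (hx : 0 < x) :
    IntegrableOn (fun l : ℝ => x / ((1 - l) * x + l)) (Icc 0 1) μ := by
  refine ContinuousOn.integrableOn_compact isCompact_Icc ?_
  exact continuousOn_const.div (by fun_prop) fun l hl => (kernel_denom_pos hl.1 hl.2 hx).ne'

end Kernel

theorem strictConcaveOn_f_mu_general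
    (μ : Measure ℝ) [IsProbabilityMeasure μ]
    (hmass : 0 < μ (Set.Ioo (0:ℝ) 1)) :
    StrictConcaveOn ℝ (Set.Ioi (0:ℝ))
      (fun x : ℝ => ∫ l in Set.Icc (0:ℝ) 1, x / ((1 - l) * x + l) ∂μ) := by
  refine strictConcaveOn_integral (convex_Ioi 0) (fun x hx => integrableOn_kernel μ hx) ?_ ?_
  · filter_upwards [ae_restrict_mem measurableSet_Icc] with l hl
    exact concaveOn_kernel hl.1 hl.2
  · calc 0 < μ (Ioo 0 1) := hmass
      _ = μ (Ioo 0 1 ∩ Icc 0 1) := by rw [inter_eq_left.2 Ioo_subset_Icc_self]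
      _ ≤ μ.restrict (Icc 0 1) (Ioo 0 1) := Measure.le_restrict_apply _ _
      _ ≤ μ.restrict (Icc 0 1) {l | StrictConcaveOn ℝ (Ioi 0) _} :=
        measure_mono fun l hl => strictConcaveOn_kernel hl.1 hl.2

/-- If `μ` is a Borel probability measure on `[0,1]` with `μ((0,1)) > 0`, then
`f_μ(x) = ∫_{[0,1]} x / ((1-λ)x + λ) dμ(λ)` is strictly concave on `(0,∞)`. -/
theorem strictConcaveOn_f_mu
    (μ : Measure ℝ) [IsProbabilityMeasure μ]
    (hsupp : μ (Set.Icc (0:ℝ) 1)ᶜ = 0)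
    (hmass : 0 < μ (Set.Ioo (0:ℝ) 1)) :
    StrictConcaveOn ℝ (Set.Ioi (0:ℝ))
      (fun x : ℝ => ∫ l in Set.Icc (0:ℝ) 1, x / ((1 - l) * x + l) ∂μ) :=
  strictConcaveOn_f_mu_general μ hmass
end

section
/- Let A₁,…,A_m be n×n positive definite complex matrices and w₁,…,w_m > 0 with Σⱼ wⱼ = 1, and define Q(X) = Σⱼ wⱼ (tr(Aⱼ⁻¹X) + tr(AⱼX⁻¹) − 2n) for positive definite X (this is the loss function Σⱼ wⱼ tr g(Aⱼ^{-1/2} X Aⱼ^{-1/2}) with g(x) = x − 2 + 1/x, the divergence associated with the geometric mean). Then a positive definite matrix X₀ minimizes Q over the positive definite cone if and only if X₀ (Σⱼ wⱼ Aⱼ⁻¹) X₀ = Σⱼ wⱼ Aⱼ. -/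
/-!
Since `∑ wⱼ = 1`, `Q(Y) = re tr(B Y + C Y⁻¹) - 2n` with `B = ∑ wⱼ Aⱼ⁻¹` and `C = ∑ wⱼ Aⱼ`.
If `G` is positive definite with `G B G = C`, expanding gives
`Q(Y) - Q(G) = re tr(B (Y - G) Y⁻¹ (Y - G))`, which is nonnegative and vanishes only at `Y = G`,
because `B` and `Y⁻¹` are positive definite. Such a `G` always exists (the geometric mean
`B⁻¹ # C = B^{-1/2} (B^{1/2} C B^{1/2})^{1/2} B^{-1/2}`), so the minimisers of `Q` are exactly the
positive definite solutions of the Riccati equation `X B X = C`.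
-/

open Matrix
open scoped ComplexOrder

variable {n : Type*} [Fintype n] [DecidableEq n]

/-- The loss function `Q(X) = Σⱼ wⱼ (tr(Aⱼ⁻¹X) + tr(AⱼX⁻¹) − 2n)` associated with the
geometric mean (i.e. `Σⱼ wⱼ tr g(Aⱼ^{-1/2} X Aⱼ^{-1/2})` with `g(x) = x − 2 + 1/x`). -/
noncomputable def geomLoss {m : ℕ} (A : Fin m → Matrix n n ℂ) (w : Fin m → ℝ)
    (X : Matrix n n ℂ) : ℝ :=
  ∑ j, w j * ((((A j)⁻¹ * X).trace).re + ((A j * X⁻¹).trace).re - 2 * (Fintype.card n))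

open scoped MatrixOrder

section GeometricMean

variable {A : Type*} [PartialOrder A] [Ring A] [StarRing A] [TopologicalSpace A]
  [StarOrderedRing A] [Algebra ℝ A] [ContinuousFunctionalCalculus ℝ A IsSelfAdjoint]
  [NonnegSpectrumClass ℝ A] [IsSemitopologicalRing A] [T2Space A]

/-- The witness is the geometric mean `a⁻¹ # b = r⁻¹ (r b r)^{1/2} r⁻¹`, where `r = a^{1/2}`. -/
theorem IsStrictlyPositive.exists_isStrictlyPositive_mul_mul_eq {a b : A}
    (ha : IsStrictlyPositive a) (hb : IsStrictlyPositive b) :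
    ∃ g, IsStrictlyPositive g ∧ g * a * g = b := by
  obtain ⟨r, hr⟩ := ha.isUnit_cfcSqrt
  have hr_star : star r = r := Units.ext <| by
    rw [Units.coe_star, hr]; exact (ha.sqrt).isSelfAdjoint.star_eq
  have hrr : (r : A) * r = a := hr ▸ CFC.sqrt_mul_sqrt_self a
  have hrbr : IsStrictlyPositive ((r : A) * b * r) :=
    hb.conjugate_of_isUnit_of_isSelfAdjoint _ _ r.isUnit (congrArg Units.val hr_star)
  set s := CFC.sqrt ((r : A) * b * r)
  have hss : s * s = r * b * r := CFC.sqrt_mul_sqrt_self _ hrbr.nonneg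
  refine ⟨(r⁻¹ : Aˣ) * s * (r⁻¹ : Aˣ), (hrbr.sqrt _).conjugate_of_isUnit_of_isSelfAdjoint _ _
    (r⁻¹).isUnit (by rw [IsSelfAdjoint, ← Units.coe_star_inv, hr_star]), ?_⟩
  calc (r⁻¹ : Aˣ) * s * (r⁻¹ : Aˣ) * a * ((r⁻¹ : Aˣ) * s * (r⁻¹ : Aˣ))
      = (r⁻¹ : Aˣ) * (s * s) * (r⁻¹ : Aˣ) := by simp [← hrr, mul_assoc]
    _ = b := by simp [hss, mul_assoc]

end GeometricMean

namespace Matrix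

theorem trace_mul_sub_mul_inv_mul_sub {R : Type*} [CommRing R] {B G Y : Matrix n n R}
    (hG : IsUnit G.det) (hY : IsUnit Y.det) :
    (B * Y + G * B * G * Y⁻¹).trace - (B * G + G * B * G * G⁻¹).trace =
      (B * (Y - G) * Y⁻¹ * (Y - G)).trace := by
  have hexpand : B * (Y - G) * Y⁻¹ * (Y - G) = B * Y - B * G - B * G + B * G * Y⁻¹ * G := by
    simp only [mul_sub, sub_mul, Y.nonsing_inv_mul_cancel_right _ hY,
      Y.mul_nonsing_inv_cancel_right _ hY]
    abel
  have hcycle : (B * G * Y⁻¹ * G).trace = (G * B * G * Y⁻¹).trace := by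
    rw [trace_mul_comm, ← Matrix.mul_assoc, ← Matrix.mul_assoc]
  rw [hexpand, G.mul_nonsing_inv_cancel_right _ hG]
  simp only [trace_add, trace_sub, hcycle, trace_mul_comm G B]
  abel

variable {𝕜 : Type*} [RCLike 𝕜]

omit [DecidableEq n] in
theorem trace_conjTranspose_mul_self_mul_conjTranspose_mul_conjTranspose_mul_self_mul
    (E F D : Matrix n n 𝕜) :
    (Fᴴ * F * Dᴴ * (Eᴴ * E) * D).trace = ((E * D * Fᴴ)ᴴ * (E * D * Fᴴ)).trace := by
  calc (Fᴴ * F * Dᴴ * (Eᴴ * E) * D).trace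
      = (Fᴴ * (F * Dᴴ * Eᴴ * E * D)).trace := by simp only [Matrix.mul_assoc]
    _ = (F * Dᴴ * Eᴴ * E * D * Fᴴ).trace := trace_mul_comm _ _
    _ = ((E * D * Fᴴ)ᴴ * (E * D * Fᴴ)).trace := by
      simp only [conjTranspose_mul, conjTranspose_conjTranspose, Matrix.mul_assoc]

theorem PosSemidef.re_trace_mul_conjTranspose_mul_mul_nonneg {B M : Matrix n n 𝕜}
    (hB : B.PosSemidef) (hM : M.PosSemidef) (D : Matrix n n 𝕜) :
    0 ≤ RCLike.re (B * Dᴴ * M * D).trace := by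
  obtain ⟨F, rfl⟩ := CStarAlgebra.nonneg_iff_eq_star_mul_self.mp hB.nonneg
  obtain ⟨E, rfl⟩ := CStarAlgebra.nonneg_iff_eq_star_mul_self.mp hM.nonneg
  simp only [star_eq_conjTranspose,
    trace_conjTranspose_mul_self_mul_conjTranspose_mul_conjTranspose_mul_self_mul]
  exact (RCLike.nonneg_iff.mp (posSemidef_conjTranspose_mul_self _).trace_nonneg).1

theorem PosDef.re_trace_mul_conjTranspose_mul_mul_eq_zero_iff {B M D : Matrix n n 𝕜}
    (hB : B.PosDef) (hM : M.PosDef) :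
    RCLike.re (B * Dᴴ * M * D).trace = 0 ↔ D = 0 := by
  obtain ⟨F, hF, rfl⟩ :=
    CStarAlgebra.isStrictlyPositive_iff_eq_star_mul_self.mp hB.isStrictlyPositive
  obtain ⟨E, hE, rfl⟩ :=
    CStarAlgebra.isStrictlyPositive_iff_eq_star_mul_self.mp hM.isStrictlyPositive
  simp only [star_eq_conjTranspose,
    trace_conjTranspose_mul_self_mul_conjTranspose_mul_conjTranspose_mul_self_mul]
  have him :=
    (RCLike.nonneg_iff.mp (posSemidef_conjTranspose_mul_self (E * D * Fᴴ)).trace_nonneg).2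
  rw [← trace_conjTranspose_mul_self_eq_zero_iff.trans
    (((show IsUnit Fᴴ from hF.star).mul_left_eq_zero).trans hE.mul_right_eq_zero)]
  exact ⟨fun h => RCLike.ext (by rw [h, map_zero]) (by rw [him, map_zero]),
    fun h => by rw [h, map_zero]⟩

end Matrix

section TraceLoss

variable {𝕜 : Type*} [RCLike 𝕜]

noncomputable def traceLoss (B C Y : Matrix n n 𝕜) : ℝ :=
  RCLike.re (B * Y + C * Y⁻¹).trace

theorem traceLoss_sub_traceLoss_eq {B G Y : Matrix n n 𝕜} (hG : G.PosDef) (hY : Y.PosDef) :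
    traceLoss B (G * B * G) Y - traceLoss B (G * B * G) G =
      RCLike.re (B * (Y - G)ᴴ * Y⁻¹ * (Y - G)).trace := by
  rw [traceLoss, traceLoss, ← map_sub, (hY.isHermitian.sub hG.isHermitian).eq,
    trace_mul_sub_mul_inv_mul_sub ((isUnit_iff_isUnit_det G).mp hG.isUnit)
      ((isUnit_iff_isUnit_det Y).mp hY.isUnit)]

theorem traceLoss_mul_mul_le {B G Y : Matrix n n 𝕜} (hB : B.PosSemidef) (hG : G.PosDef)
    (hY : Y.PosDef) : traceLoss B (G * B * G) G ≤ traceLoss B (G * B * G) Y := by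
  have hdiff := traceLoss_sub_traceLoss_eq (B := B) hG hY
  have hnonneg := hB.re_trace_mul_conjTranspose_mul_mul_nonneg hY.inv.posSemidef (Y - G)
  linarith

theorem traceLoss_isMin_iff {B C X : Matrix n n 𝕜} (hB : B.PosDef) (hC : C.PosDef)
    (hX : X.PosDef) :
    (∀ Y : Matrix n n 𝕜, Y.PosDef → traceLoss B C X ≤ traceLoss B C Y) ↔ X * B * X = C := by
  refine ⟨fun hmin => ?_, fun hXBX Y hY => hXBX ▸ traceLoss_mul_mul_le hB.posSemidef hX hY⟩
  obtain ⟨G, hG_pos, rfl⟩ :=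
    hB.isStrictlyPositive.exists_isStrictlyPositive_mul_mul_eq hC.isStrictlyPositive
  have hG := hG_pos.posDef
  have hle := hmin G hG
  have hge := traceLoss_mul_mul_le hB.posSemidef hG hX
  have hzero : RCLike.re (B * (X - G)ᴴ * X⁻¹ * (X - G)).trace = 0 := by
    rw [← traceLoss_sub_traceLoss_eq hG hX]
    linarith
  rw [sub_eq_zero.mp ((hB.re_trace_mul_conjTranspose_mul_mul_eq_zero_iff hX.inv).mp hzero)]

end TraceLoss

theorem geomLoss_eq_traceLoss {m : ℕ} (A : Fin m → Matrix n n ℂ) {w : Fin m → ℝ}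
    (hw : ∑ j, w j = 1) (X : Matrix n n ℂ) :
    geomLoss A w X = traceLoss (∑ j, w j • (A j)⁻¹) (∑ j, w j • A j) X - 2 * Fintype.card n := by
  simp only [geomLoss, traceLoss, Finset.sum_mul, smul_mul_assoc, trace_add, trace_sum,
    trace_smul, map_add, map_sum, RCLike.re_to_complex, Complex.smul_re, smul_eq_mul]
  rw [← Finset.sum_add_distrib]
  simp only [mul_sub, mul_add, Finset.sum_sub_distrib, ← Finset.sum_mul, hw, one_mul]

/-- A positive definite `X₀` minimizes `Q` over the positive definite cone if and
only if `X₀ (Σⱼ wⱼ Aⱼ⁻¹) X₀ = Σⱼ wⱼ Aⱼ`. -/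
theorem geomLoss_isMin_iff_riccati {m : ℕ}
    (A : Fin m → Matrix n n ℂ) (hA : ∀ j, (A j).PosDef)
    (w : Fin m → ℝ) (hw : ∀ j, 0 < w j) (hsum : ∑ j, w j = 1)
    (X₀ : Matrix n n ℂ) (hX₀ : X₀.PosDef) :
    (∀ Y : Matrix n n ℂ, Y.PosDef → geomLoss A w X₀ ≤ geomLoss A w Y) ↔
      X₀ * (∑ j, w j • (A j)⁻¹) * X₀ = ∑ j, w j • A j := by
  have huniv : (Finset.univ : Finset (Fin m)).Nonempty :=
    Finset.nonempty_of_sum_ne_zero (hsum ▸ one_ne_zero)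
  have hB : (∑ j, w j • (A j)⁻¹).PosDef := posDef_sum huniv fun j _ => (hA j).inv.smul (hw j)
  have hC : (∑ j, w j • A j).PosDef := posDef_sum huniv fun j _ => (hA j).smul (hw j)
  simp only [geomLoss_eq_traceLoss A hsum, sub_le_sub_iff_right]
  exact traceLoss_isMin_iff hB hC hX₀
end

section
/- Let A₁,…,A_m be n×n positive definite complex matrices and w₁,…,w_m > 0 with Σⱼ wⱼ = 1. Then the function X ↦ Σⱼ wⱼ (tr(Aⱼ⁻¹X) + tr(AⱼX⁻¹) − 2n) has a unique minimizer over the cone of positive definite matrices, and this minimizer equals H # A, the geometric mean of the weighted harmonic mean H = (Σⱼ wⱼ Aⱼ⁻¹)⁻¹ and the weighted arithmetic mean A = Σⱼ wⱼ Aⱼ. -/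
open Matrix
open scoped ComplexOrder

variable {n : Type*} [Fintype n] [DecidableEq n]

/-- The geometric mean `A # B = A^{1/2} (A^{-1/2} B A^{-1/2})^{1/2} A^{1/2}`. -/
noncomputable def geomMean (A B : Matrix n n ℂ) : Matrix n n ℂ :=
  msqrt A * msqrt ((msqrt A)⁻¹ * B * (msqrt A)⁻¹) * msqrt A

/-!
With `M = Σⱼ wⱼ Aⱼ⁻¹` and `N = Σⱼ wⱼ Aⱼ`, the loss is `tr(MX) + tr(NX⁻¹) − 2n` because the
weights sum to one. The geometric mean `G = M⁻¹ # N` solves the Riccati equation `G M G = N`,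
and with it the loss gap completes a square:
`Q(X) − Q(G) = tr(X⁻¹ (X − G) M (X − G)) = ‖X^{-1/2} (X − G) M^{1/2}‖²_F`,
which is nonnegative and vanishes only at `X = G`.
-/

section msqrt

open scoped MatrixOrder

lemma msqrt_eq_cfcSqrt {M : Matrix n n ℂ} (hM : M.PosSemidef) : msqrt M = CFC.sqrt M := by
  rw [CFC.sqrt_eq_real_sqrt M hM.nonneg, cfcₙ_eq_cfc, msqrt]

lemma msqrt_mul_self {M : Matrix n n ℂ} (hM : M.PosSemidef) : msqrt M * msqrt M = M := by
  rw [msqrt_eq_cfcSqrt hM]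
  exact CFC.sqrt_mul_sqrt_self M hM.nonneg

lemma posDef_msqrt {M : Matrix n n ℂ} (hM : M.PosDef) : (msqrt M).PosDef := by
  rw [msqrt_eq_cfcSqrt hM.posSemidef]
  exact hM.isStrictlyPositive.sqrt.posDef

end msqrt

namespace Matrix.PosDef

variable {P M S : Matrix n n ℂ}

lemma trace_mul_mul_mul_self_eq_trace_mul_conjTranspose (hP : P.PosDef) (hM : M.PosDef)
    (hS : S.IsHermitian) :
    (P * (S * M * S)).trace =
      (msqrt P * S * msqrt M * (msqrt P * S * msqrt M)ᴴ).trace := by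
  have hC := (posDef_msqrt hP).isHermitian.eq
  have hD := (posDef_msqrt hM).isHermitian.eq
  conv_lhs => rw [← msqrt_mul_self hP.posSemidef, ← msqrt_mul_self hM.posSemidef]
  rw [conjTranspose_mul, conjTranspose_mul, hC, hD, hS.eq, trace_mul_comm]
  simp only [Matrix.mul_assoc]
  rw [trace_mul_comm (msqrt P)]
  simp only [Matrix.mul_assoc]

lemma trace_mul_mul_mul_self_nonneg (hP : P.PosDef) (hM : M.PosDef) (hS : S.IsHermitian) :
    0 ≤ (P * (S * M * S)).trace := by
  rw [trace_mul_mul_mul_self_eq_trace_mul_conjTranspose hP hM hS]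
  exact (posSemidef_self_mul_conjTranspose _).trace_nonneg

lemma trace_mul_mul_mul_self_eq_zero_iff (hP : P.PosDef) (hM : M.PosDef) (hS : S.IsHermitian) :
    (P * (S * M * S)).trace = 0 ↔ S = 0 := by
  refine ⟨fun h => ?_, fun h => by simp [h]⟩
  rwa [trace_mul_mul_mul_self_eq_trace_mul_conjTranspose hP hM hS,
    trace_mul_conjTranspose_self_eq_zero_iff, (posDef_msqrt hM).isUnit.mul_left_eq_zero,
    (posDef_msqrt hP).isUnit.mul_right_eq_zero] at h

end Matrix.PosDef

section geomMean

variable {H N : Matrix n n ℂ}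

lemma posDef_inv_msqrt_mul_mul_inv_msqrt (hH : H.PosDef) (hN : N.PosDef) :
    ((msqrt H)⁻¹ * N * (msqrt H)⁻¹).PosDef := by
  have hRi := (posDef_msqrt hH).inv
  simpa only [star_eq_conjTranspose, hRi.isHermitian.eq] using
    (IsUnit.posDef_star_right_conjugate_iff hRi.isUnit).mpr hN

lemma posDef_geomMean (hH : H.PosDef) (hN : N.PosDef) : (geomMean H N).PosDef := by
  have hR := posDef_msqrt hH
  rw [geomMean]
  simpa only [star_eq_conjTranspose, hR.isHermitian.eq] using
    (IsUnit.posDef_star_right_conjugate_iff hR.isUnit).mpr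
      (posDef_msqrt (posDef_inv_msqrt_mul_mul_inv_msqrt hH hN))

lemma geomMean_mul_inv_mul_geomMean (hH : H.PosDef) (hN : N.PosDef) :
    geomMean H N * H⁻¹ * geomMean H N = N := by
  have hR : IsUnit (msqrt H).det := (isUnit_iff_isUnit_det _).mp (posDef_msqrt hH).isUnit
  have hHinv : H⁻¹ = (msqrt H)⁻¹ * (msqrt H)⁻¹ := by
    rw [← Matrix.mul_inv_rev, msqrt_mul_self hH.posSemidef]
  have hTT := msqrt_mul_self (posDef_inv_msqrt_mul_mul_inv_msqrt hH hN).posSemidef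
  rw [geomMean, hHinv]
  generalize msqrt ((msqrt H)⁻¹ * N * (msqrt H)⁻¹) = T at hTT ⊢
  simp only [Matrix.mul_assoc, mul_nonsing_inv_cancel_left _ _ hR,
    nonsing_inv_mul_cancel_left _ _ hR]
  rw [← Matrix.mul_assoc T, hTT]
  simp only [Matrix.mul_assoc, mul_nonsing_inv_cancel_left _ _ hR, nonsing_inv_mul _ hR,
    Matrix.mul_one]

end geomMean

lemma geomLoss_eq {m : ℕ} (A : Fin m → Matrix n n ℂ) {w : Fin m → ℝ} (hsum : ∑ j, w j = 1)
    (X : Matrix n n ℂ) :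
    geomLoss A w X = (((∑ j, w j • (A j)⁻¹) * X).trace + ((∑ j, w j • A j) * X⁻¹).trace).re
      - 2 * Fintype.card n := by
  rw [Finset.sum_mul, Finset.sum_mul]
  simp only [geomLoss, smul_mul_assoc, trace_sum, trace_smul, Complex.add_re, Complex.re_sum,
    Complex.smul_re, smul_eq_mul, mul_sub, mul_add, Finset.sum_sub_distrib, Finset.sum_add_distrib]
  rw [← Finset.sum_mul, hsum, one_mul]

lemma trace_add_trace_inv_sub_eq_trace_inv_mul {R : Type*} [CommRing R] {M N G X : Matrix n n R}
    (hX : IsUnit X.det) (hG : IsUnit G.det) (hGMG : G * M * G = N) :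
    (M * X).trace + (N * X⁻¹).trace - ((M * G).trace + (N * G⁻¹).trace) =
      (X⁻¹ * ((X - G) * M * (X - G))).trace := by
  have hNG : N * G⁻¹ = G * M := by rw [← hGMG, mul_nonsing_inv_cancel_right _ _ hG]
  have hsq : (X - G) * M * (X - G) = X * (M * X) - X * (M * G) - G * (M * X) + N := by
    rw [← hGMG]; noncomm_ring
  rw [hsq, Matrix.mul_add, Matrix.mul_sub, Matrix.mul_sub, trace_add, trace_sub, trace_sub,
    nonsing_inv_mul_cancel_left _ _ hX, nonsing_inv_mul_cancel_left _ _ hX, hNG,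
    trace_mul_comm X⁻¹ N, trace_mul_comm X⁻¹, ← Matrix.mul_assoc G M X,
    mul_nonsing_inv_cancel_right _ _ hX, trace_mul_comm G M]
  ring

lemma geomLoss_sub_geomLoss_eq {m : ℕ} (A : Fin m → Matrix n n ℂ) {w : Fin m → ℝ}
    (hsum : ∑ j, w j = 1) {G X : Matrix n n ℂ} (hX : X.PosDef) (hG : G.PosDef)
    (hGMG : G * (∑ j, w j • (A j)⁻¹) * G = ∑ j, w j • A j) :
    geomLoss A w X - geomLoss A w G =
      ((X⁻¹ * ((X - G) * (∑ j, w j • (A j)⁻¹) * (X - G))).trace).re := by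
  rw [geomLoss_eq A hsum, geomLoss_eq A hsum, ← trace_add_trace_inv_sub_eq_trace_inv_mul
    ((isUnit_iff_isUnit_det _).mp hX.isUnit) ((isUnit_iff_isUnit_det _).mp hG.isUnit) hGMG,
    Complex.sub_re]
  ring

/-- The loss function `X ↦ Σⱼ wⱼ (tr(Aⱼ⁻¹X) + tr(AⱼX⁻¹) − 2n)` has a unique
minimizer over the positive definite cone, namely the geometric mean `H # A` of the weighted
harmonic mean `H = (Σⱼ wⱼ Aⱼ⁻¹)⁻¹` and the weighted arithmetic mean `A = Σⱼ wⱼ Aⱼ`. -/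
theorem geomLoss_unique_minimizer {m : ℕ}
    (A : Fin m → Matrix n n ℂ) (hA : ∀ j, (A j).PosDef)
    (w : Fin m → ℝ) (hw : ∀ j, 0 < w j) (hsum : ∑ j, w j = 1) :
    (geomMean (∑ j, w j • (A j)⁻¹)⁻¹ (∑ j, w j • A j)).PosDef ∧
    (∀ Y : Matrix n n ℂ, Y.PosDef →
      geomLoss A w (geomMean (∑ j, w j • (A j)⁻¹)⁻¹ (∑ j, w j • A j)) ≤ geomLoss A w Y) ∧
    (∀ Y : Matrix n n ℂ, Y.PosDef →
      (∀ Z : Matrix n n ℂ, Z.PosDef → geomLoss A w Y ≤ geomLoss A w Z) →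
      Y = geomMean (∑ j, w j • (A j)⁻¹)⁻¹ (∑ j, w j • A j)) := by
  set M := ∑ j, w j • (A j)⁻¹
  set N := ∑ j, w j • A j
  have hne : (Finset.univ : Finset (Fin m)).Nonempty :=
    Finset.nonempty_of_sum_ne_zero (by rw [hsum]; exact one_ne_zero)
  have hM : M.PosDef := posDef_sum hne fun j _ => (hA j).inv.smul (hw j)
  have hN : N.PosDef := posDef_sum hne fun j _ => (hA j).smul (hw j)
  set G := geomMean M⁻¹ N
  have hG : G.PosDef := posDef_geomMean hM.inv hN
  have hGMG : G * M * G = N := by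
    simpa only [nonsing_inv_nonsing_inv _ ((isUnit_iff_isUnit_det _).mp hM.isUnit)] using
      geomMean_mul_inv_mul_geomMean hM.inv hN
  have hgap_nonneg (Y : Matrix n n ℂ) (hY : Y.PosDef) :=
    hY.inv.trace_mul_mul_mul_self_nonneg hM (hY.isHermitian.sub hG.isHermitian)
  refine ⟨hG, fun Y hY => ?_, fun Y hY hmin => ?_⟩
  · linarith [geomLoss_sub_geomLoss_eq A hsum hY hG hGMG,
      (Complex.nonneg_iff.mp (hgap_nonneg Y hY)).1]
  · have hgap_nonpos : (Y⁻¹ * ((Y - G) * M * (Y - G))).trace ≤ 0 :=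
      Complex.nonpos_iff.mpr ⟨by linarith [geomLoss_sub_geomLoss_eq A hsum hY hG hGMG, hmin G hG],
        (Complex.nonneg_iff.mp (hgap_nonneg Y hY)).2.symm⟩
    rw [← sub_eq_zero, ← hY.inv.trace_mul_mul_mul_self_eq_zero_iff hM
      (hY.isHermitian.sub hG.isHermitian)]
    exact le_antisymm hgap_nonpos (hgap_nonneg Y hY)
end

section
/- For any n×n positive definite complex matrices A and B, the geometric mean is symmetric: A^{1/2}(A^{-1/2} B A^{-1/2})^{1/2} A^{1/2} = B^{1/2}(B^{-1/2} A B^{-1/2})^{1/2} B^{1/2}. -/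
/-! The geometric mean `A # B` is the unique positive semidefinite solution `X` of the Riccati
equation `X A⁻¹ X = B`: conjugating by `A^{-1/2}` turns the equation into
`Y * Y = A^{-1/2} B A^{-1/2}`, whose positive semidefinite solution is unique. Inverting
`G A⁻¹ G = B` for the positive definite `G = A # B` gives `G B⁻¹ G = A`, so `G = B # A`. -/

open Matrix
open scoped ComplexOrder

variable {n : Type*} [Fintype n] [DecidableEq n]

open scoped MatrixOrder

namespace Matrix

section Conj

variable {m R : Type*} [Fintype m] [Ring R] [PartialOrder R] [StarRing R] {M S : Matrix m m R}

theorem PosSemidef.mul_mul_same_of_isHermitian (hM : M.PosSemidef) (hS : S.IsHermitian) :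
    (S * M * S).PosSemidef := by
  simpa only [hS.eq] using hM.conjTranspose_mul_mul_same S

theorem PosDef.mul_mul_same_of_isHermitian [DecidableEq m] (hM : M.PosDef) (hS : S.IsHermitian)
    (hSu : IsUnit S) : (S * M * S).PosDef := by
  simpa only [star_eq_conjTranspose, hS.eq] using hSu.posDef_star_left_conjugate_iff.2 hM

end Conj

section InvConj

variable {R : Type*} [CommRing R] {a X Y : Matrix n n R}

theorem mul_mul_eq_iff_eq_inv_mul_mul (ha : IsUnit a.det) :
    a * Y * a = X ↔ Y = a⁻¹ * X * a⁻¹ := by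
  constructor <;> rintro rfl <;>
    simp only [mul_assoc, mul_nonsing_inv_cancel_left, nonsing_inv_mul_cancel_left,
      mul_nonsing_inv, nonsing_inv_mul, mul_one, ha]

theorem mul_inv_mul_eq_swap {A B : Matrix n n R} (hX : IsUnit X.det) (hA : IsUnit A.det)
    (h : X * A⁻¹ * X = B) : X * B⁻¹ * X = A := by
  subst h
  simp only [mul_inv_rev, nonsing_inv_nonsing_inv A hA, mul_assoc, mul_nonsing_inv_cancel_left,
    nonsing_inv_mul, mul_one, hX]

end InvConj

variable {M X : Matrix n n ℂ}

theorem PosSemidef.msqrt_eq_sqrt (hM : M.PosSemidef) : msqrt M = CFC.sqrt M := by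
  rw [CFC.sqrt_eq_real_sqrt M hM.nonneg, cfcₙ_eq_cfc (hf0 := Real.sqrt_zero), msqrt]

theorem PosDef.msqrt (hM : M.PosDef) : (msqrt M).PosDef := by
  rw [hM.posSemidef.msqrt_eq_sqrt]
  exact hM.isStrictlyPositive.sqrt.posDef

theorem PosSemidef.msqrt_eq_iff (hM : M.PosSemidef) (hX : X.PosSemidef) :
    msqrt M = X ↔ X * X = M := by
  rw [hM.msqrt_eq_sqrt, CFC.sqrt_eq_iff M X hM.nonneg hX.nonneg, eq_comm]

theorem PosSemidef.msqrt_mul_msqrt (hM : M.PosSemidef) : msqrt M * msqrt M = M := by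
  rw [hM.msqrt_eq_sqrt, CFC.sqrt_mul_sqrt_self M hM.nonneg]

end Matrix

variable {A B X : Matrix n n ℂ}

theorem geomMean_posDef (hA : A.PosDef) (hB : B.PosDef) : (geomMean A B).PosDef := by
  have ha := hA.msqrt
  have hC := hB.mul_mul_same_of_isHermitian ha.inv.isHermitian ha.inv.isUnit
  exact hC.msqrt.mul_mul_same_of_isHermitian ha.isHermitian ha.isUnit

theorem geomMean_eq_iff (hA : A.PosDef) (hB : B.PosSemidef) (hX : X.PosSemidef) :
    geomMean A B = X ↔ X * A⁻¹ * X = B := by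
  have haH := hA.msqrt.inv.isHermitian
  have ha : IsUnit (msqrt A).det := (isUnit_iff_isUnit_det _).1 hA.msqrt.isUnit
  have hAinv : A⁻¹ = (msqrt A)⁻¹ * (msqrt A)⁻¹ := by
    rw [← Matrix.mul_inv_rev, hA.posSemidef.msqrt_mul_msqrt]
  set a := msqrt A
  set Y := a⁻¹ * X * a⁻¹
  calc geomMean A B = X ↔ msqrt (a⁻¹ * B * a⁻¹) = Y := mul_mul_eq_iff_eq_inv_mul_mul ha
    _ ↔ Y * Y = a⁻¹ * B * a⁻¹ :=
      (hB.mul_mul_same_of_isHermitian haH).msqrt_eq_iff (hX.mul_mul_same_of_isHermitian haH)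
    _ ↔ a * (Y * Y) * a = B := (mul_mul_eq_iff_eq_inv_mul_mul ha).symm
    _ ↔ X * A⁻¹ * X = B := by
      rw [hAinv]
      simp only [Y, mul_assoc, mul_nonsing_inv_cancel_left, nonsing_inv_mul, mul_one, ha]

/-- For positive definite matrices `A` and `B`, the geometric mean is symmetric:
`A^{1/2}(A^{-1/2} B A^{-1/2})^{1/2} A^{1/2} = B^{1/2}(B^{-1/2} A B^{-1/2})^{1/2} B^{1/2}`. -/
theorem geomMean_comm (A B : Matrix n n ℂ) (hA : A.PosDef) (hB : B.PosDef) :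
    geomMean A B = geomMean B A := by
  have hG := geomMean_posDef hA hB
  have hGA : geomMean A B * A⁻¹ * geomMean A B = B :=
    (geomMean_eq_iff hA hB.posSemidef hG.posSemidef).1 rfl
  have hGB : geomMean A B * B⁻¹ * geomMean A B = A :=
    mul_inv_mul_eq_swap ((isUnit_iff_isUnit_det _).1 hG.isUnit)
      ((isUnit_iff_isUnit_det _).1 hA.isUnit) hGA
  exact ((geomMean_eq_iff hB hA.posSemidef hG.posSemidef).2 hGB).symm
end
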